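/- Let P(t) be a rational parametrization of C. The reparametrizing curve 𝔊(P) is reducible if and only if P(t) is A-rdf. -/

import Mathlib

noncomputable section

namespace ConchoidPaper

open Polynomial

variable {K : Type*} [Field K]

/-- The squared norm `‖P‖² = b(P,P)` for the bilinear form
`b((x₁,x₂),(y₁,y₂)) = x₁y₁ + x₂y₂` on `K²`. -/
def normSq (P : K × K) : K := P.1 * P.1 + P.2 * P.2

/-- The zero set in `K²` of a bivariate polynomial (variables `X 0 ↦ y₁`, `X 1 ↦ y₂`). -/
def zeroSet (f : MvPolynomial (Fin 2) K) : Set (K × K) :=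
  {x | MvPolynomial.eval ![x.1, x.2] f = 0}

/-- Zariski closure in `K²`: the set of points at which every polynomial
vanishing identically on `S` vanishes. -/
def zClosure (S : Set (K × K)) : Set (K × K) :=
  {x | ∀ f : MvPolynomial (Fin 2) K,
      (∀ y ∈ S, MvPolynomial.eval ![y.1, y.2] f = 0) →
      MvPolynomial.eval ![x.1, x.2] f = 0}

/-- `S` is Zariski closed in `K²`. -/
def IsZClosed (S : Set (K × K)) : Prop := zClosure S ⊆ S

/-- `S` is irreducible for the Zariski topology on `K²`: it is nonempty and is not
covered by two Zariski-closed sets unless it is contained in one of them. -/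
def IsZIrreducible (S : Set (K × K)) : Prop :=
  S.Nonempty ∧
  ∀ F₁ F₂ : Set (K × K), IsZClosed F₁ → IsZClosed F₂ → S ⊆ F₁ ∪ F₂ → S ⊆ F₁ ∨ S ⊆ F₂

/-- `M` is an irreducible component of `X`: a maximal Zariski-closed irreducible subset. -/
def IsComponent (X M : Set (K × K)) : Prop :=
  M ⊆ X ∧ IsZClosed M ∧ IsZIrreducible M ∧
  ∀ M' : Set (K × K), M' ⊆ X → IsZClosed M' → IsZIrreducible M' → M ⊆ M' → M' = M

/-- `Ω` is a nonempty Zariski-dense subset of `M`. -/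
def IsDenseIn (Ω M : Set (K × K)) : Prop :=
  Ω.Nonempty ∧ Ω ⊆ M ∧ M ⊆ zClosure Ω

/-- The conchoid incidence variety `B(C)` of the curve `C = zeroSet f` from the focus `A`
at distance `d`: triples `(x̄, ȳ, λ)` with `f(ȳ) = 0`, `‖x̄ − ȳ‖² = d²` and
`x̄ = A + λ(ȳ − A)`. -/
def incidence (f : MvPolynomial (Fin 2) K) (A : K × K) (d : K) :
    Set ((K × K) × (K × K) × K) :=
  {w | w.2.1 ∈ zeroSet f ∧ normSq (w.1 - w.2.1) = d ^ 2 ∧ w.1 = A + w.2.2 • (w.2.1 - A)}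

/-- The conchoid `𝔠(C,A,d)`: the Zariski closure of `π₁(B(C))`. -/
def conchoid (f : MvPolynomial (Fin 2) K) (A : K × K) (d : K) : Set (K × K) :=
  zClosure (Prod.fst '' incidence f A d)

/-- `S` is one of the two isotropic lines `y₁ ± √(-1) y₂ = 0`. -/
def IsIsotropicLine (S : Set (K × K)) : Prop :=
  ∃ s : K, s ^ 2 = -1 ∧ S = {y : K × K | y.1 + s * y.2 = 0}

/-- `S` is a line passing through the point `A`. -/
def IsLineThrough (S : Set (K × K)) (A : K × K) : Prop :=
  ∃ u v : K, (u ≠ 0 ∨ v ≠ 0) ∧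
    S = {y : K × K | u * (y.1 - A.1) + v * (y.2 - A.2) = 0}

/-- `S` is a line in `K²`. -/
def IsLine (S : Set (K × K)) : Prop :=
  ∃ u v w : K, (u ≠ 0 ∨ v ≠ 0) ∧ S = {y : K × K | u * y.1 + v * y.2 + w = 0}

/-- The circle of center `A` and radius `d`, i.e. `‖ȳ − A‖² = d²`. -/
def circleSet (A : K × K) (d : K) : Set (K × K) := {y : K × K | normSq (y - A) = d ^ 2}

/-- The point of `K²` obtained by evaluating the pair of rational functions `P` at `t`. -/
def ratPoint (P : RatFunc K × RatFunc K) (t : K) : K × K :=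
  (P.1.num.eval t / P.1.denom.eval t, P.2.num.eval t / P.2.denom.eval t)

/-- `t` avoids the poles of both components of `P`. -/
def PolesAvoided (P : RatFunc K × RatFunc K) (t : K) : Prop :=
  P.1.denom.eval t ≠ 0 ∧ P.2.denom.eval t ≠ 0

/-- The image of the pair of rational functions `P`, poles avoided. -/
def paramImage (P : RatFunc K × RatFunc K) : Set (K × K) :=
  {x | ∃ t : K, PolesAvoided P t ∧ x = ratPoint P t}

/-- `P ∈ K(t)²` is a rational parametrization of the set `S ⊆ K²`: its components are
not both constant, its image lies in `S`, and its image is Zariski dense in `S`. -/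
def IsParamOf (S : Set (K × K)) (P : RatFunc K × RatFunc K) : Prop :=
  (¬ ∃ c : K × K, P.1 = RatFunc.C c.1 ∧ P.2 = RatFunc.C c.2) ∧
  paramImage P ⊆ S ∧ S ⊆ zClosure (paramImage P)

/-- `S` is rational: it admits a rational parametrization. -/
def IsRationalSet (S : Set (K × K)) : Prop := ∃ P : RatFunc K × RatFunc K, IsParamOf S P

/-- `P` is proper: `K(P₁,P₂) = K(t)`. -/
def IsProper (P : RatFunc K × RatFunc K) : Prop :=
  IntermediateField.adjoin K {P.1, P.2} = ⊤

/-- `P` is at rational distance to the focus `A` (`A`-rdf):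
`(P₁ − a)² + (P₂ − b)² = m(t)²` for some rational function `m`. -/
def IsRDF (A : K × K) (P : RatFunc K × RatFunc K) : Prop :=
  ∃ m : RatFunc K, (P.1 - RatFunc.C A.1) ^ 2 + (P.2 - RatFunc.C A.2) ^ 2 = m ^ 2

/-- A field is trivially a normalized GCD monoid; this makes `K[x₁]` a normalized GCD
monoid, so that primitive parts w.r.t. `x₂` of polynomials in `K[x₁][x₂]` make sense. -/
noncomputable local instance : NormalizedGCDMonoid K := by
  classical
  letI : StrongNormalizedGCDMonoid K := inferInstance
  infer_instance

/-- The numerator of `−2x₂(P₁(x₁) − a) + (x₂² − 1)(P₂(x₁) − b)`, written as a polynomial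
in `x₂` (outer variable) with coefficients in `K[x₁]` (inner variable). -/
def repNum (A : K × K) (P : RatFunc K × RatFunc K) : Polynomial (Polynomial K) :=
  Polynomial.C ((P.2 - RatFunc.C A.2).num * (P.1 - RatFunc.C A.1).denom) *
      (Polynomial.X ^ 2 - 1) +
    Polynomial.C (-2 * ((P.1 - RatFunc.C A.1).num * (P.2 - RatFunc.C A.2).denom)) *
      Polynomial.X

/-- Defining polynomial of the reparametrizing curve `𝔊(P)`: the primitive part with
respect to `x₂` of the numerator of `−2x₂(P₁(x₁) − a) + (x₂² − 1)(P₂(x₁) − b)`. -/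
def repPoly (A : K × K) (P : RatFunc K × RatFunc K) : Polynomial (Polynomial K) :=
  (repNum A P).primPart

/-- Zero set in the `(x₁,x₂)`-plane of `g ∈ K[x₁][x₂]` (`x₂` outer, `x₁` inner). -/
def zeroSetP (g : Polynomial (Polynomial K)) : Set (K × K) :=
  {x | Polynomial.eval₂ (Polynomial.evalRingHom x.1) x.2 g = 0}

/-- The reparametrizing curve `𝔊(P)` has at least one rational component, i.e. some
irreducible factor of its defining polynomial defines a rational curve. -/
def repHasRatComponent (A : K × K) (P : RatFunc K × RatFunc K) : Prop :=
  ∃ g : Polynomial (Polynomial K), Irreducible g ∧ g ∣ repPoly A P ∧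
    IsRationalSet (zeroSetP g)

/-- The reparametrizing curve `𝔊(P)` is rational: its defining polynomial is
irreducible and its zero set admits a rational parametrization. -/
def repIsRational (A : K × K) (P : RatFunc K × RatFunc K) : Prop :=
  Irreducible (repPoly A P) ∧ IsRationalSet (zeroSetP (repPoly A P))

/-- Composition `P ∘ φ` of rational functions. -/
def comp (P φ : RatFunc K) : RatFunc K :=
  Polynomial.aeval φ P.num / Polynomial.aeval φ P.denom

/-- `M` is a simple component of the conchoid: an irreducible component possessing a
nonempty Zariski-dense subset `Ω` such that each `Q ∈ Ω` has exactly one point in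
`π₂(π₁⁻¹(Q))`. -/
def IsSimpleComponent (f : MvPolynomial (Fin 2) K) (A : K × K) (d : K)
    (M : Set (K × K)) : Prop :=
  IsComponent (conchoid f A d) M ∧
  ∃ Ω : Set (K × K), IsDenseIn Ω M ∧
    ∀ Q ∈ Ω, ∃! y : K × K, ∃ l : K, (Q, y, l) ∈ incidence f A d

/-! With `u = P₂ - b` and `v = P₁ - a`, the numerator of `𝔊(P)` is, up to the nonzero factor
given by the denominators, the quadratic `u (x₂² - 1) - 2 v x₂` over `K(x₁)`. By Gauss's lemma
its primitive part is irreducible over `K[x₁]` exactly when this quadratic is irreducible over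
`K(x₁)`. As `C` is not the horizontal line through `A`, `u ≠ 0`, so the quadratic is reducible
iff it has a root iff its discriminant `4 (v² + u²)` is a square in `K(x₁)`, i.e. iff `P` is
`A`-rdf. -/

theorem _root_.Polynomial.not_irreducible_quadratic_iff {F : Type*} [Field F] [NeZero (2 : F)]
    {a b c : F} (ha : a ≠ 0) :
    ¬ Irreducible (C a * X ^ 2 + C b * X + C c) ↔ ∃ s, discrim a b c = s * s := by
  have hdeg : (C a * X ^ 2 + C b * X + C c).natDegree = 2 := natDegree_quadratic ha
  have hne : C a * X ^ 2 + C b * X + C c ≠ 0 := ne_zero_of_natDegree_gt (n := 0) (by omega)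
  rw [irreducible_iff_roots_eq_zero_of_degree_le_three (by omega) (by omega),
    Multiset.eq_zero_iff_forall_notMem]
  simp only [mem_roots hne, IsRoot.def, eval_add, eval_mul, eval_C, eval_pow, eval_X, not_forall,
    not_not]
  constructor
  · rintro ⟨x, hx⟩
    exact ⟨2 * a * x + b, by
      rw [discrim_eq_sq_of_quadratic_eq_zero (x := x) (by linear_combination hx), sq]⟩
  · intro hs
    obtain ⟨x, hx⟩ := exists_quadratic_eq_zero ha hs
    exact ⟨x, by linear_combination hx⟩

theorem _root_.Polynomial.irreducible_primPart_iff_irreducible_map {R F : Type*} [CommRing R]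
    [IsDomain R] [NormalizedGCDMonoid R] [Field F] [Algebra R F] [IsFractionRing R F]
    (p : R[X]) : Irreducible p.primPart ↔ Irreducible (p.map (algebraMap R F)) := by
  rcases eq_or_ne p 0 with rfl | hp
  · simp [not_irreducible_one]
  have hunit : IsUnit (C (algebraMap R F p.content)) := isUnit_C.mpr <| Ne.isUnit <|
    (map_ne_zero_iff _ (IsFractionRing.injective R F)).mpr (content_eq_zero_iff.not.mpr hp)
  have hmap : p.map (algebraMap R F) = p.primPart.map (algebraMap R F) * hunit.unit := by
    conv_lhs => rw [eq_C_content_mul_primPart p]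
    rw [Polynomial.map_mul, map_C, IsUnit.unit_spec, mul_comm]
  rw [(isPrimitive_primPart p).irreducible_iff_irreducible_map_fraction_map (K := F),
    Associated.irreducible_iff ⟨_, hmap.symm⟩]

theorem _root_.Polynomial.not_irreducible_C_mul_X_sq_sub_one_add_C_mul_X_iff {F : Type*}
    [Field F] [NeZero (2 : F)] {u v : F} (hu : u ≠ 0) :
    ¬ Irreducible (C u * (X ^ 2 - 1) + C (-2 * v) * X) ↔ ∃ m, v ^ 2 + u ^ 2 = m ^ 2 := by
  have hQ : C u * (X ^ 2 - 1) + C (-2 * v) * X = C u * X ^ 2 + C (-2 * v) * X + C (-u) := by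
    rw [C_neg]; ring
  rw [hQ, not_irreducible_quadratic_iff hu, discrim]
  constructor
  · rintro ⟨s, hs⟩
    exact ⟨s / 2, by field_simp; linear_combination hs⟩
  · rintro ⟨m, hm⟩
    exact ⟨2 * m, by linear_combination 4 * hm⟩

theorem map_repNum (A : K × K) (P : RatFunc K × RatFunc K) :
    (repNum A P).map (algebraMap K[X] (RatFunc K)) =
      C (algebraMap K[X] (RatFunc K)
          ((P.2 - RatFunc.C A.2).denom * (P.1 - RatFunc.C A.1).denom)) *
        (C (P.2 - RatFunc.C A.2) * (X ^ 2 - 1) + C (-2 * (P.1 - RatFunc.C A.1)) * X) := by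
  have num_eq (r : RatFunc K) : algebraMap K[X] (RatFunc K) r.num =
      r * algebraMap K[X] (RatFunc K) r.denom :=
    (div_eq_iff (RatFunc.algebraMap_ne_zero r.denom_ne_zero)).mp (RatFunc.num_div_denom r)
  simp only [repNum, Polynomial.map_add, Polynomial.map_mul, Polynomial.map_sub,
    Polynomial.map_pow, Polynomial.map_one, Polynomial.map_X, Polynomial.map_C, map_mul, map_neg,
    Polynomial.map_neg, Polynomial.map_ofNat, map_ofNat, num_eq]
  ring

theorem irreducible_repPoly_iff (A : K × K) (P : RatFunc K × RatFunc K) :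
    Irreducible (repPoly A P) ↔
      Irreducible
        (C (P.2 - RatFunc.C A.2) * (X ^ 2 - 1) + C (-2 * (P.1 - RatFunc.C A.1)) * X) := by
  rw [repPoly, irreducible_primPart_iff_irreducible_map (F := RatFunc K), map_repNum]
  refine irreducible_isUnit_mul (isUnit_C.mpr (Ne.isUnit ?_))
  exact RatFunc.algebraMap_ne_zero <|
    mul_ne_zero (RatFunc.denom_ne_zero _) (RatFunc.denom_ne_zero _)

theorem eval_aeval_X_C (f : MvPolynomial (Fin 2) K) (x c : K) :
    (MvPolynomial.aeval ![X, C c] f).eval x = MvPolynomial.eval ![x, c] f := by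
  have hv : (fun i => aeval x (![X, C c] i)) = ![x, c] := by
    funext i
    fin_cases i <;> simp
  rw [← coe_aeval_eq_eval, MvPolynomial.comp_aeval_apply, hv]
  rfl

theorem _root_.RatFunc.infinite_image_eval [Infinite K] {r : RatFunc K}
    (hr : ∀ c, r ≠ RatFunc.C c) :
    ((fun t => r.num.eval t / r.denom.eval t) '' {t | r.denom.eval t ≠ 0}).Infinite := by
  intro hfin
  have hpoles : {t | r.denom.eval t = 0}.Finite := finite_setOfPred_isRoot r.denom_ne_zero
  have hdom : {t | r.denom.eval t ≠ 0}.Infinite := by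
    simpa only [Set.compl_ofPred] using hpoles.infinite_compl
  refine hdom ((hfin.preimage' fun c _ => ?_).subset (Set.subset_preimage_image _ _))
  have hc : r.num - C c * r.denom ≠ 0 := fun h => hr c <| by
    rw [← RatFunc.num_div_denom r, sub_eq_zero.mp h, map_mul, RatFunc.algebraMap_C,
      mul_div_cancel_right₀ _ (RatFunc.algebraMap_ne_zero r.denom_ne_zero)]
  refine ((finite_setOfPred_isRoot hc).union hpoles).subset fun t (ht : _ = c) => ?_
  by_cases hpole : r.denom.eval t = 0
  · exact Or.inr hpole
  · left
    simp [IsRoot, ← ht, div_mul_cancel₀ _ hpole]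

theorem IsParamOf.zeroSet_eq_of_snd_eq_C [Infinite K] {f : MvPolynomial (Fin 2) K}
    {P : RatFunc K × RatFunc K} {c : K} (hP : IsParamOf (zeroSet f) P) (hc : P.2 = RatFunc.C c) :
    zeroSet f = {y | y.2 = c} := by
  have ratPoint_snd (t : K) : (ratPoint P t).2 = c := by
    simp [ratPoint, hc, RatFunc.num_C, RatFunc.denom_C]
  have hP1 (c' : K) : P.1 ≠ RatFunc.C c' := fun h => hP.1 ⟨(c', c), h, hc⟩
  have hp : MvPolynomial.aeval ![X, C c] f = 0 := by
    refine eq_zero_of_infinite_isRoot _ ((RatFunc.infinite_image_eval hP1).mono ?_)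
    rintro _ ⟨t, ht, rfl⟩
    have hmem := hP.2.1 ⟨t, ⟨ht, by simp [hc, RatFunc.denom_C]⟩, rfl⟩
    rw [zeroSet, Set.mem_ofPred_eq, ratPoint_snd] at hmem
    rwa [Set.mem_ofPred_eq, IsRoot, eval_aeval_X_C]
  ext y
  constructor
  · intro hy
    have hline := hP.2.2 hy (MvPolynomial.X 1 - MvPolynomial.C c) <| by
      rintro _ ⟨t, -, rfl⟩
      simp [ratPoint_snd]
    simpa [sub_eq_zero] using hline
  · intro (hy : y.2 = c)
    rw [zeroSet, Set.mem_ofPred_eq, hy, ← eval_aeval_X_C, hp, eval_zero]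

theorem IsParamOf.snd_sub_C_ne_zero [Infinite K] {f : MvPolynomial (Fin 2) K}
    {P : RatFunc K × RatFunc K} {A : K × K} (hP : IsParamOf (zeroSet f) P)
    (hline : ¬ IsLineThrough (zeroSet f) A) : P.2 - RatFunc.C A.2 ≠ 0 := fun h => hline
  ⟨0, 1, Or.inr one_ne_zero, by
    ext y
    simp [hP.zeroSet_eq_of_snd_eq_C (sub_eq_zero.mp h), sub_eq_zero]⟩

theorem repCurve_reducible_iff_rdf_general
    [CharZero K]
    (f : MvPolynomial (Fin 2) K) (A : K × K)
    (hline : ¬ IsLineThrough (zeroSet f) A)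
    (P : RatFunc K × RatFunc K) (hP : IsParamOf (zeroSet f) P) :
    ¬ Irreducible (repPoly A P) ↔ IsRDF A P := by
  rw [irreducible_repPoly_iff,
    not_irreducible_C_mul_X_sq_sub_one_add_C_mul_X_iff (hP.snd_sub_C_ne_zero hline)]
  rfl

/-- Lemma 2 of the paper. The reparametrizing curve `𝔊(P)` is
reducible (its defining polynomial is not irreducible over `K`) iff `P` is `A`-rdf. -/
theorem repCurve_reducible_iff_rdf
    [IsAlgClosed K] [CharZero K]
    (f : MvPolynomial (Fin 2) K) (A : K × K)
    (hf : Irreducible f)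
    (hiso : ¬ IsIsotropicLine (zeroSet f))
    (hline : ¬ IsLineThrough (zeroSet f) A)
    (P : RatFunc K × RatFunc K) (hP : IsParamOf (zeroSet f) P) :
    ¬ Irreducible (repPoly A P) ↔ IsRDF A P :=
  repCurve_reducible_iff_rdf_general f A hline P hP

end ConchoidPaper
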